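/- Let S be a subring of a commutative ring R and I an ideal of S. A polynomial f ∈ (T_n(R))[x] satisfies f(C)_ℓ ∈ T_n(I) for all C ∈ T_n(S) (left substitution) if and only if for all 1 ≤ i ≤ j ≤ n, the scalar polynomial f_{ij} ∈ R[x] satisfies f_{ij}(C) ∈ T_i(I) for all C ∈ T_i(S). -/

import Mathlib

/-!
Entry `(a, b)` of `f(C)ₗ` is `∑ₘ f_{mb}(C)_{am}`, and for upper triangular `C` the entry
`f_{mb}(C)_{am}` only depends on the leading `(m+1) × (m+1)` block of `C`, because restricting
an upper triangular matrix to an interval of indices commutes with products. This gives `⇐` at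
once; the terms with `m > b` vanish as the coefficients of `f` are upper triangular.

For `⇒` we induct on `i`. To reach the entry `(p, q)` of `f_{ij}(D)`, put the leading
`(q+1)`-block of `D` on the diagonal of an otherwise zero `n × n` matrix `C`, ending in column `i`.
In the entry `(·, j)` of `f(C)ₗ` the terms `m < i` lie in `I` by induction, the terms `m > i`
vanish since column `m` of `C` is zero, and the term `m = i` is `f_{ij}(D)_{pq}`.
-/

open Matrix Polynomial Finset

theorem Fin.ordConnected_range_of_val_eq_add {r n s : ℕ} {e : Fin r → Fin n}
    (he : ∀ t, (e t : ℕ) = t + s) : (Set.range e).OrdConnected := by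
  refine ⟨?_⟩
  rintro _ ⟨a, rfl⟩ _ ⟨b, rfl⟩ c ⟨hac, hcb⟩
  rw [Fin.le_def, he] at hac hcb
  exact ⟨⟨c - s, by omega⟩, Fin.ext (by rw [he, Fin.val_mk]; omega)⟩

theorem Fin.strictMono_of_val_eq_add {r n s : ℕ} {e : Fin r → Fin n}
    (he : ∀ t, (e t : ℕ) = t + s) : StrictMono e := fun a b hab => by
  rw [Fin.lt_def, he, he]
  exact Nat.add_lt_add_right hab s

namespace Matrix

variable {α β R : Type*}

section Zero

variable [Zero R]

theorem BlockTriangular.submatrix_of_strictMono [LinearOrder α] [LinearOrder β]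
    {M : Matrix β β R} (hM : M.BlockTriangular id) {e : α → β} (he : StrictMono e) :
    (M.submatrix e e).BlockTriangular id :=
  fun _ _ h => hM (he h)

noncomputable def extendByZero (e : α → β) (D : Matrix α α R) : Matrix β β R :=
  of fun x y => Function.extend e (fun a => Function.extend e (D a) 0 y) 0 x

variable {e : α → β} {D : Matrix α α R}

theorem extendByZero_apply_apply (he : Function.Injective e) (a b : α) :
    extendByZero e D (e a) (e b) = D a b := by
  simp only [extendByZero, of_apply, he.extend_apply]

theorem submatrix_extendByZero (he : Function.Injective e) :
    (extendByZero e D).submatrix e e = D :=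
  ext fun a b => extendByZero_apply_apply he a b

theorem extendByZero_apply_of_notMem_range_left {x : β} (hx : x ∉ Set.range e) (y : β) :
    extendByZero e D x y = 0 := by
  rw [extendByZero, of_apply]
  exact Function.extend_apply' _ _ x hx

theorem extendByZero_apply_of_notMem_range_right (x : β) {y : β} (hy : y ∉ Set.range e) :
    extendByZero e D x y = 0 := by
  classical
  rw [extendByZero, of_apply, Function.extend_def]
  split_ifs
  exacts [Function.extend_apply' _ _ y hy, rfl]

theorem extendByZero_apply_mem {S : Set R} (hS : 0 ∈ S) (hD : ∀ a b, D a b ∈ S) (x y : β) :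
    extendByZero e D x y ∈ S := by
  classical
  simp only [extendByZero, of_apply, Function.extend_def]
  split_ifs
  exacts [hD _ _, hS, hS]

theorem BlockTriangular.extendByZero [LinearOrder α] [LinearOrder β]
    (hD : D.BlockTriangular id) (he : StrictMono e) : (extendByZero e D).BlockTriangular id := by
  intro x y hyx
  by_cases hy : y ∈ Set.range e
  · by_cases hx : x ∈ Set.range e
    · obtain ⟨a, rfl⟩ := hx
      obtain ⟨b, rfl⟩ := hy
      rw [extendByZero_apply_apply he.injective]
      exact hD (he.lt_iff_lt.mp hyx)
    · exact extendByZero_apply_of_notMem_range_left hx y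
  · exact extendByZero_apply_of_notMem_range_right x hy

end Zero

section Semiring

variable [Fintype α] [Fintype β] [LinearOrder β]

/-- A product of upper triangular matrices only involves indices between the row and the
column, so restricting to an order-convex set of indices is multiplicative. -/
theorem BlockTriangular.submatrix_mul [NonUnitalNonAssocSemiring R] {M N : Matrix β β R}
    (hM : M.BlockTriangular id) (hN : N.BlockTriangular id) {e : α → β}
    (he : Function.Injective e) (hconn : (Set.range e).OrdConnected) :
    (M * N).submatrix e e = M.submatrix e e * N.submatrix e e := by
  ext a b
  refine (Fintype.sum_of_injective e he _ _ (fun c hc => ?_) fun _ => rfl).symm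
  by_cases hac : e a ≤ c
  · by_cases hcb : c ≤ e b
    · exact absurd (hconn.out ⟨a, rfl⟩ ⟨b, rfl⟩ ⟨hac, hcb⟩) hc
    · exact mul_eq_zero_of_right _ (hN (not_le.mp hcb))
  · exact mul_eq_zero_of_left (hM (not_le.mp hac)) _

variable [DecidableEq α] [DecidableEq β]

theorem BlockTriangular.submatrix_pow [Semiring R] {M : Matrix β β R}
    (hM : M.BlockTriangular id) {e : α → β} (he : Function.Injective e)
    (hconn : (Set.range e).OrdConnected) (k : ℕ) :
    (M ^ k).submatrix e e = M.submatrix e e ^ k := by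
  induction k with
  | zero => exact submatrix_one e he
  | succ k ih => rw [pow_succ, (hM.pow k).submatrix_mul hM he hconn, ih, pow_succ]

end Semiring

section CommSemiring

variable [CommSemiring R] [Fintype β] [DecidableEq β]

theorem BlockTriangular.aeval [LinearOrder β] {M : Matrix β β R} (hM : M.BlockTriangular id)
    (p : R[X]) : (aeval M p).BlockTriangular id := by
  have h := aeval_subalgebra_coe p (blockTriangularSubalgebra R R (id : β → β)) ⟨M, hM⟩
  exact h ▸ (Polynomial.aeval (⟨M, hM⟩ : blockTriangularSubalgebra R R id) p).2

theorem aeval_apply_eq_zero_of_col_eq_zero {C : Matrix β β R} {m : β} (hm : ∀ x, C x m = 0)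
    (p : R[X]) {a : β} (ha : a ≠ m) : aeval C p a m = 0 := by
  rw [← divX_mul_X_add p, map_add, map_mul, aeval_X, aeval_C, add_apply, mul_apply,
    algebraMap_matrix_apply, if_neg ha, add_zero]
  exact Finset.sum_eq_zero fun x _ => by rw [hm x, mul_zero]

variable [Fintype α] [DecidableEq α] [LinearOrder β]

theorem BlockTriangular.submatrix_aeval {M : Matrix β β R} (hM : M.BlockTriangular id)
    {e : α → β} (he : Function.Injective e) (hconn : (Set.range e).OrdConnected) (p : R[X]) :
    (Polynomial.aeval M p).submatrix e e = Polynomial.aeval (M.submatrix e e) p := by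
  induction p using Polynomial.induction_on' with
  | add p q hp hq => rw [map_add, map_add, ← hp, ← hq]; rfl
  | monomial k r =>
    rw [aeval_monomial, aeval_monomial, ← Algebra.smul_def, ← Algebra.smul_def,
      ← hM.submatrix_pow he hconn]
    rfl

theorem BlockTriangular.aeval_extendByZero_apply [LinearOrder α] {D : Matrix α α R}
    (hD : D.BlockTriangular id) {e : α → β} (he : StrictMono e)
    (hconn : (Set.range e).OrdConnected) (p : R[X]) (a b : α) :
    Polynomial.aeval (Matrix.extendByZero e D) p (e a) (e b) = Polynomial.aeval D p a b := by
  have h := (hD.extendByZero he).submatrix_aeval he.injective hconn p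
  rw [submatrix_extendByZero he.injective] at h
  exact congrFun (congrFun h a) b

end CommSemiring

end Matrix

theorem Polynomial.sum_C_coeff_apply_mul_X_pow {R ι : Type*} [CommSemiring R] [Fintype ι]
    [DecidableEq ι] (f : (Matrix ι ι R)[X]) (i j : ι) :
    ∑ k ∈ f.support, C (f.coeff k i j) * X ^ k = matPolyEquiv.symm f i j := by
  ext k
  simp only [finsetSum_coeff, coeff_C_mul_X_pow, Finset.sum_ite_eq,
    matPolyEquiv_symm_apply_coeff]
  split_ifs with h
  · rfl
  · rw [notMem_support_iff.mp h, Matrix.zero_apply]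

section TriangularPolynomial

variable {R : Type*} {n : ℕ}

section CommSemiring

variable [CommSemiring R]

theorem sum_pow_mul_coeff_apply (f : (Matrix (Fin n) (Fin n) R)[X])
    (C : Matrix (Fin n) (Fin n) R) (a b : Fin n) :
    (∑ k ∈ f.support, C ^ k * f.coeff k) a b =
      ∑ m, aeval C (matPolyEquiv.symm f m b) a m := by
  simp_rw [← sum_C_coeff_apply_mul_X_pow, map_sum, Matrix.sum_apply, Matrix.mul_apply]
  rw [Finset.sum_comm]
  refine Finset.sum_congr rfl fun m _ => Finset.sum_congr rfl fun k _ => ?_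
  rw [map_mul, aeval_C, map_pow, aeval_X, ← Algebra.smul_def, Matrix.smul_apply, smul_eq_mul,
    mul_comm]

theorem aeval_apply_eq_aeval_submatrix_castLE {C : Matrix (Fin n) (Fin n) R}
    (hC : C.BlockTriangular id) (p : R[X]) {a m : Fin n} (ham : a ≤ m) :
    aeval C p a m = aeval (C.submatrix (Fin.castLE m.isLt) (Fin.castLE m.isLt)) p
      ⟨a, Nat.lt_succ_of_le ham⟩ (Fin.last m) := by
  rw [← hC.submatrix_aeval (Fin.castLE_injective _)
    (Fin.ordConnected_range_of_val_eq_add (s := 0) fun _ => rfl)]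
  rfl

end CommSemiring

variable [CommRing R] (J : AddSubgroup R) {S : Set R}

theorem aeval_apply_mem_of_forall_submatrix_castLE {C : Matrix (Fin n) (Fin n) R}
    (hC : C.BlockTriangular id) (hCS : ∀ a b, C a b ∈ S) {p : R[X]} {m : Fin n}
    (h : ∀ D : Matrix (Fin (m + 1)) (Fin (m + 1)) R, D.BlockTriangular id →
      (∀ a b, D a b ∈ S) → ∀ a b, aeval D p a b ∈ J) (a : Fin n) :
    aeval C p a m ∈ J := by
  by_cases ham : a ≤ m
  · rw [aeval_apply_eq_aeval_submatrix_castLE hC p ham]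
    exact h _ (hC.submatrix_of_strictMono (Fin.strictMono_castLE _)) (fun _ _ => hCS _ _) _ _
  · rw [hC.aeval p (not_le.mp ham)]
    exact J.zero_mem

variable (f : (Matrix (Fin n) (Fin n) R)[X])

theorem aeval_apply_mem_of_col_eq_zero
    (H : ∀ C : Matrix (Fin n) (Fin n) R, C.BlockTriangular id → (∀ a b, C a b ∈ S) →
      ∀ a b, (∑ k ∈ f.support, C ^ k * f.coeff k) a b ∈ J)
    {i : Fin n} (j : Fin n)
    (hlt : ∀ m < i, ∀ D : Matrix (Fin (m + 1)) (Fin (m + 1)) R, D.BlockTriangular id →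
      (∀ a b, D a b ∈ S) → ∀ a b, aeval D (matPolyEquiv.symm f m j) a b ∈ J)
    {C : Matrix (Fin n) (Fin n) R} (hC : C.BlockTriangular id) (hCS : ∀ a b, C a b ∈ S)
    (hcol : ∀ m, i < m → ∀ x, C x m = 0) {a : Fin n} (hai : a ≤ i) :
    aeval C (matPolyEquiv.symm f i j) a i ∈ J := by
  have hsum := H C hC hCS a j
  rw [sum_pow_mul_coeff_apply, ← Finset.add_sum_erase _ _ (mem_univ i)] at hsum
  refine (J.add_mem_cancel_right (J.sum_mem fun m hm => ?_)).mp hsum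
  rcases lt_or_gt_of_ne (ne_of_mem_erase hm) with hmi | hmi
  · exact aeval_apply_mem_of_forall_submatrix_castLE J hC hCS (hlt m hmi) a
  · rw [aeval_apply_eq_zero_of_col_eq_zero (hcol m hmi) _ (hai.trans_lt hmi).ne]
    exact J.zero_mem

theorem aeval_matPolyEquiv_symm_apply_mem (hS : 0 ∈ S)
    (H : ∀ C : Matrix (Fin n) (Fin n) R, C.BlockTriangular id → (∀ a b, C a b ∈ S) →
      ∀ a b, (∑ k ∈ f.support, C ^ k * f.coeff k) a b ∈ J)
    (i j : Fin n) (hij : i ≤ j) :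
    ∀ D : Matrix (Fin (i + 1)) (Fin (i + 1)) R, D.BlockTriangular id →
      (∀ a b, D a b ∈ S) → ∀ p q, aeval D (matPolyEquiv.symm f i j) p q ∈ J := by
  induction i using WellFoundedLT.induction generalizing j with
  | ind i IH =>
  intro D hD hDS p q
  rcases lt_or_ge q p with hqp | hpq
  · rw [hD.aeval _ hqp]
    exact J.zero_mem
  let e : Fin (q + 1) → Fin n := fun t => ⟨t + (i - q), by omega⟩
  have he : ∀ t, (e t : ℕ) = t + (i - q) := fun _ => rfl
  let ι : Fin (q + 1) → Fin (i + 1) := Fin.castLE q.isLt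
  let C := extendByZero e (D.submatrix ι ι)
  have hDι : (D.submatrix ι ι).BlockTriangular id :=
    hD.submatrix_of_strictMono (Fin.strictMono_castLE _)
  have hcol : ∀ m, i < m → ∀ x, C x m = 0 := by
    rintro m hm x
    refine extendByZero_apply_of_notMem_range_right x ?_
    rintro ⟨t, rfl⟩
    rw [Fin.lt_def, he] at hm
    omega
  let p' : Fin (q + 1) := ⟨p, Nat.lt_succ_of_le hpq⟩
  have hentry : aeval D (matPolyEquiv.symm f i j) p q
      = aeval C (matPolyEquiv.symm f i j) (e p') (e (Fin.last q)) := by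
    rw [hDι.aeval_extendByZero_apply (Fin.strictMono_of_val_eq_add he)
      (Fin.ordConnected_range_of_val_eq_add he), ← hD.submatrix_aeval (Fin.castLE_injective _)
      (Fin.ordConnected_range_of_val_eq_add (s := 0) fun _ => rfl)]
    rfl
  have hei : e (Fin.last q) = i := Fin.ext (by rw [he, Fin.val_last]; omega)
  rw [hentry, hei]
  refine aeval_apply_mem_of_col_eq_zero J f H j (fun m hm => IH m hm j (hm.le.trans hij))
    (hDι.extendByZero (Fin.strictMono_of_val_eq_add he))
    (extendByZero_apply_mem hS fun _ _ => hDS _ _) hcol ?_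
  rw [Fin.le_def, he]
  omega

theorem sum_pow_mul_coeff_apply_mem (hf : ∀ k, (f.coeff k).BlockTriangular id)
    (H : ∀ i j : Fin n, i ≤ j → ∀ D : Matrix (Fin (i + 1)) (Fin (i + 1)) R,
      D.BlockTriangular id → (∀ a b, D a b ∈ S) →
        ∀ p q, aeval D (matPolyEquiv.symm f i j) p q ∈ J)
    {C : Matrix (Fin n) (Fin n) R} (hC : C.BlockTriangular id) (hCS : ∀ a b, C a b ∈ S)
    (a b : Fin n) : (∑ k ∈ f.support, C ^ k * f.coeff k) a b ∈ J := by
  rw [sum_pow_mul_coeff_apply]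
  refine J.sum_mem fun m _ => ?_
  rcases le_or_gt m b with hmb | hbm
  · exact aeval_apply_mem_of_forall_submatrix_castLE J hC hCS (H m b hmb) a
  · have hzero : matPolyEquiv.symm f m b = 0 := Polynomial.ext fun k => by
      rw [matPolyEquiv_symm_apply_coeff, hf k hbm, coeff_zero]
    rw [hzero, map_zero, Matrix.zero_apply]
    exact J.zero_mem

end TriangularPolynomial

/-- `f ∈ (Tₙ(R))[x]` maps `Tₙ(S)` into `Tₙ(I)` under left substitution iff for all
`1 ≤ i ≤ j ≤ n` the scalar polynomial `f_{ij}` maps `T_i(S)` into `T_i(I)`.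
(With 0-indexed `i : Fin n` the size `i` becomes `i + 1`.) -/
theorem stmt14 (n : ℕ) (R : Type*) [CommRing R] (S : Subring R) (I : Ideal S)
    (f : Polynomial (Matrix (Fin n) (Fin n) R))
    (hf : ∀ k, (f.coeff k).BlockTriangular id) :
    (∀ C : Matrix (Fin n) (Fin n) R, C.BlockTriangular id → (∀ a b, C a b ∈ S) →
        ((∑ k ∈ f.support, C ^ k * f.coeff k)).BlockTriangular id ∧
          ∀ a b : Fin n, ∃ s ∈ I, (s : R) = (∑ k ∈ f.support, C ^ k * f.coeff k) a b)
    ↔ ∀ i j : Fin n, i ≤ j →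
        ∀ C : Matrix (Fin ((i : ℕ) + 1)) (Fin ((i : ℕ) + 1)) R, C.BlockTriangular id →
          (∀ a b, C a b ∈ S) →
          (Polynomial.aeval C
              (∑ k ∈ f.support, Polynomial.C (f.coeff k i j) * Polynomial.X ^ k)).BlockTriangular id ∧
            ∀ a b, ∃ s ∈ I, (s : R) =
              (Polynomial.aeval C
                (∑ k ∈ f.support, Polynomial.C (f.coeff k i j) * Polynomial.X ^ k)) a b := by
  -- `∃ s ∈ I, (s : R) = x` is by definition membership of `x` in `J`
  let J : AddSubgroup R := I.toAddSubgroup.map S.subtype.toAddMonoidHom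
  simp only [sum_C_coeff_apply_mul_X_pow]
  constructor
  · intro H i j hij D hD hDS
    exact ⟨hD.aeval _, aeval_matPolyEquiv_symm_apply_mem J f S.zero_mem
      (fun C hC hCS => (H C hC hCS).2) i j hij D hD hDS⟩
  · intro H C hC hCS
    refine ⟨(blockTriangularSubalgebra R R id).sum_mem fun k _ => (hC.pow k).mul (hf k),
      sum_pow_mul_coeff_apply_mem J f hf (fun i j hij D hD hDS => (H i j hij D hD hDS).2) hC hCS⟩
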